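/- Let C be a category with an initial object 0 and colimits of ω-chains (i.e., colimits of all functors from the poset ℕ to C), and let F : C ⥤ C be an endofunctor that preserves colimits of ω-chains. Then F admits an initial F-algebra. -/

import Mathlib

/-!
Adámek's construction. Let `L` be the colimit of the chain `⊥ ⟶ F ⊥ ⟶ F (F ⊥) ⟶ ⋯`. Since `F`
preserves it, `F L` is the colimit of the image of the chain under `F`, which is the chain with its
first term dropped; its legs into `L` induce the structure map `F L ⟶ L`. For an algebra `(A, a)`,
the maps `Fⁿ ⊥ ⟶ A` obtained by iterating `a ∘ F (-)` on `⊥ ⟶ A` form a cocone, and any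
homomorphism `L ⟶ A` restricts to them on each `Fⁿ ⊥` by induction on `n`; this gives both
existence and uniqueness.
-/

open CategoryTheory CategoryTheory.Limits

namespace CategoryTheory.Endofunctor

universe v u

variable {C : Type u} [Category.{v} C] [HasInitial C] (F : C ⥤ C)

/-- Reducible so that `rw` identifies `initialChainObj F (n + 1)` with
`F.obj (initialChainObj F n)` when matching composites. -/
@[reducible] noncomputable def initialChainObj : ℕ → C
  | 0 => ⊥_ C
  | n + 1 => F.obj (initialChainObj n)

noncomputable def initialChainStep : ∀ n, initialChainObj F n ⟶ initialChainObj F (n + 1)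
  | 0 => initial.to _
  | n + 1 => F.map (initialChainStep n)

noncomputable def initialChain : ℕ ⥤ C := Functor.ofSequence (initialChainStep F)

lemma initialChain_map_succ (n : ℕ) :
    (initialChain F).map (homOfLE (n.le_add_right 1)) = initialChainStep F n :=
  Functor.ofSequence_map_homOfLE_succ _ n

variable {F}

/-- Since `F (Fⁿ ⊥) = Fⁿ⁺¹ ⊥`, a cocone over the initial chain restricts to one over its image
under `F`. -/
noncomputable def initialChainCoconeSucc (c : Cocone (initialChain F)) :
    Cocone (initialChain F ⋙ F) where
  pt := c.pt
  ι := NatTrans.ofSequence (fun n => c.ι.app (n + 1)) fun n => by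
    have h := c.w (homOfLE ((n + 1).le_add_right 1))
    rw [initialChain_map_succ] at h
    simp only [Functor.comp_map, initialChain_map_succ, Functor.const_obj_map]
    exact h.trans (Category.comp_id _).symm

namespace Algebra

variable (A : Algebra F)

noncomputable def initialChainLeg : ∀ n, initialChainObj F n ⟶ A.a
  | 0 => initial.to _
  | n + 1 => F.map (initialChainLeg n) ≫ A.str

lemma initialChainStep_comp_initialChainLeg (n : ℕ) :
    initialChainStep F n ≫ A.initialChainLeg (n + 1) = A.initialChainLeg n := by
  induction n with
  | zero => exact initial.hom_ext _ _
  | succ n ih =>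
    change F.map (initialChainStep F n) ≫ F.map (A.initialChainLeg (n + 1)) ≫ A.str =
      F.map (A.initialChainLeg n) ≫ A.str
    rw [← F.map_comp_assoc, ih]

noncomputable def initialChainCocone : Cocone (initialChain F) where
  pt := A.a
  ι := NatTrans.ofSequence A.initialChainLeg fun n => by
    rw [initialChain_map_succ, Functor.const_obj_map]
    exact (A.initialChainStep_comp_initialChainLeg n).trans (Category.comp_id _).symm

end Algebra

noncomputable def initialChainCoconeLeg (c : Cocone (initialChain F)) (n : ℕ) :
    initialChainObj F n ⟶ c.pt :=
  c.ι.app n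

variable {c : Cocone (initialChain F)} (hc : IsColimit c) (hFc : IsColimit (F.mapCocone c))

noncomputable def colimitStr : F.obj c.pt ⟶ c.pt :=
  hFc.desc (initialChainCoconeSucc c)

lemma map_initialChainCoconeLeg_comp_colimitStr (n : ℕ) :
    F.map (initialChainCoconeLeg c n) ≫ colimitStr hFc = initialChainCoconeLeg c (n + 1) :=
  hFc.fac (initialChainCoconeSucc c) n

noncomputable def colimitAlgebra : Algebra F := ⟨c.pt, colimitStr hFc⟩

lemma initialChainCoconeLeg_comp_eq_initialChainLeg {A : Algebra F} {f : c.pt ⟶ A.a}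
    (hf : F.map f ≫ A.str = colimitStr hFc ≫ f) (n : ℕ) :
    initialChainCoconeLeg c n ≫ f = A.initialChainLeg n := by
  induction n with
  | zero => exact initial.hom_ext _ _
  | succ n ih =>
    rw [← map_initialChainCoconeLeg_comp_colimitStr hFc n, Category.assoc, ← hf,
      ← F.map_comp_assoc, ih]
    rfl

noncomputable def colimitAlgebraDesc (A : Algebra F) : c.pt ⟶ A.a :=
  hc.desc A.initialChainCocone

lemma initialChainCoconeLeg_comp_colimitAlgebraDesc (A : Algebra F) (n : ℕ) :
    initialChainCoconeLeg c n ≫ colimitAlgebraDesc hc A = A.initialChainLeg n :=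
  hc.fac A.initialChainCocone n

lemma map_colimitAlgebraDesc_comp_str (A : Algebra F) :
    F.map (colimitAlgebraDesc hc A) ≫ A.str = colimitStr hFc ≫ colimitAlgebraDesc hc A :=
  hFc.hom_ext fun n => by
    change F.map (initialChainCoconeLeg c n) ≫ _ = F.map (initialChainCoconeLeg c n) ≫ _
    rw [← F.map_comp_assoc, initialChainCoconeLeg_comp_colimitAlgebraDesc, ← Category.assoc,
      map_initialChainCoconeLeg_comp_colimitStr, initialChainCoconeLeg_comp_colimitAlgebraDesc]
    rfl

noncomputable def isInitialColimitAlgebra : IsInitial (colimitAlgebra hFc) :=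
  IsInitial.ofUniqueHom
    (fun A => ⟨colimitAlgebraDesc hc A, map_colimitAlgebraDesc_comp_str hc hFc A⟩)
    fun A g => Algebra.Hom.ext <| hc.hom_ext fun n =>
      (initialChainCoconeLeg_comp_eq_initialChainLeg hFc g.h n).trans
        (initialChainCoconeLeg_comp_colimitAlgebraDesc hc A n).symm

end CategoryTheory.Endofunctor

/-- If `C` has an initial object and colimits of ω-chains, and the endofunctor
`F : C ⥤ C` preserves colimits of ω-chains, then `F` admits an initial `F`-algebra. -/
theorem initial_algebra_exists {C : Type u} [Category.{v} C]
    [HasInitial C] [HasColimitsOfShape ℕ C]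
    (F : C ⥤ C) [PreservesColimitsOfShape ℕ F] :
    HasInitial (Endofunctor.Algebra F) :=
  (Endofunctor.isInitialColimitAlgebra (colimit.isColimit (Endofunctor.initialChain F))
    (isColimitOfPreserves F (colimit.isColimit _))).hasInitial
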